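/- A minimal valid function π is a facet (for every minimal valid π', P(π) ⊆ P(π') implies π' = π) if and only if for every minimal valid function π', E(π) ⊆ E(π') implies π' = π. -/

import Mathlib

/-- Minimal valid function for the Gomory–Johnson infinite group problem with parameter `f`. -/
def MinimalValid (f : ℝ) (π : ℝ → ℝ) : Prop :=
  (∀ x, 0 ≤ π x) ∧ π 0 = 0 ∧ (∀ x y, π (x + y) ≤ π x + π y) ∧
  (∀ x, π (x + 1) = π x) ∧ (∀ x, π x + π (f - x) = 1)

/-- Additivity domain. -/
def Eset (π : ℝ → ℝ) : Set (ℝ × ℝ) := {p | π p.1 + π p.2 = π (p.1 + p.2)}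

/-- `P(π)`: finite-support ℤ₊-valued functions with ∑ r·y(r) ≡ f (mod 1) and ∑ π(r)·y(r) = 1. -/
def Pset (f : ℝ) (π : ℝ → ℝ) : Set (ℝ →₀ ℕ) :=
  {y | (∃ z : ℤ, (y.sum fun r n => r * (n : ℝ)) = f + z) ∧
       (y.sum fun r n => π r * (n : ℝ)) = 1}

/-- Valid function. -/
def ValidFn (f : ℝ) (π : ℝ → ℝ) : Prop :=
  (∀ x, 0 ≤ π x) ∧
  ∀ y : ℝ →₀ ℕ, (∃ z : ℤ, (y.sum fun r n => r * (n : ℝ)) = f + z) →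
    1 ≤ (y.sum fun r n => π r * (n : ℝ))

/-!
If `(x, y)` is additive for `π`, then the multisets `{x, y, f - x - y}` and `{x + y, f - x - y}`
both lie in `P(π)`; if they also lie in `P(π')`, subtracting the two equations shows that
`(x, y)` is additive for `π'`. Conversely, a multiset `M ∈ P(π)` satisfies
`π (∑ M) = π f = 1 = ∑ π(M)`, so `π` is additive along `M`, and peeling off one element at a
time, each step of which is a pair in `E(π) ⊆ E(π')`, the same holds for `π'`; hence
`∑ π'(M) = π' f = 1`.
-/

lemma Finsupp.sum_map_toMultiset {α R : Type*} [NonAssocSemiring R] (y : α →₀ ℕ) (g : α → R) :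
    (y.toMultiset.map g).sum = y.sum fun r n => g r * n := by
  classical
  rw [Finset.sum_multiset_map_count, Finsupp.toFinset_toMultiset]
  simp only [Finsupp.count_toMultiset, nsmul_eq_mul', Finsupp.sum]

lemma mem_Pset_iff {f : ℝ} {π : ℝ → ℝ} {y : ℝ →₀ ℕ} :
    y ∈ Pset f π ↔ (∃ z : ℤ, y.toMultiset.sum = f + z) ∧ (y.toMultiset.map π).sum = 1 := by
  have hsum : y.toMultiset.sum = y.sum fun r n => r * n := by
    simpa using Finsupp.sum_map_toMultiset y id
  rw [hsum, Finsupp.sum_map_toMultiset]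
  rfl

lemma Multiset.toFinsupp_mem_Pset_iff {f : ℝ} {π : ℝ → ℝ} (M : Multiset ℝ) :
    Multiset.toFinsupp M ∈ Pset f π ↔ (∃ z : ℤ, M.sum = f + z) ∧ (M.map π).sum = 1 := by
  rw [mem_Pset_iff, Multiset.toFinsupp_toMultiset]

namespace MinimalValid

variable {f : ℝ} {π : ℝ → ℝ}

lemma apply_f (hπ : MinimalValid f π) : π f = 1 := by
  simpa [hπ.2.1] using hπ.2.2.2.2 0

lemma apply_f_add_intCast (hπ : MinimalValid f π) (z : ℤ) : π (f + z) = 1 := by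
  have hper : Function.Periodic π 1 := hπ.2.2.2.1
  simpa [hπ.apply_f] using hper.int_mul z f

end MinimalValid

lemma Multiset.apply_sum_eq_sum_map_of_Eset_subset {π π' : ℝ → ℝ} (hπ0 : π 0 ≤ 0)
    (hπ_subadd : ∀ x y, π (x + y) ≤ π x + π y) (hE : Eset π ⊆ Eset π') (M : Multiset ℝ)
    (hM : π M.sum = (M.map π).sum) : π' M.sum = (M.map π').sum := by
  induction M using Multiset.induction_on with
  | empty =>
    have hπ'0 : (0, 0) ∈ Eset π' := hE (by simpa [Eset] using hM)
    simpa [Eset] using hπ'0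
  | cons a s ih =>
    simp only [Multiset.sum_cons, Multiset.map_cons] at hM ⊢
    have hs_le : π s.sum ≤ (s.map π).sum := Multiset.le_sum_of_subadditive π hπ0 hπ_subadd s
    have hs : π s.sum = (s.map π).sum := by linarith [hπ_subadd a s.sum]
    have has : (a, s.sum) ∈ Eset π := by
      change π a + π s.sum = π (a + s.sum)
      linarith [hπ_subadd a s.sum]
    rw [← (hE has : π' a + π' s.sum = π' (a + s.sum)), ih hs]

section

variable {f : ℝ} {π π' : ℝ → ℝ}

lemma Pset_subset_of_Eset_subset (hπ : MinimalValid f π) (hπ' : MinimalValid f π')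
    (hE : Eset π ⊆ Eset π') : Pset f π ⊆ Pset f π' := by
  intro y hy
  obtain ⟨⟨z, hz⟩, hπy⟩ := mem_Pset_iff.mp hy
  have hπM : π y.toMultiset.sum = (y.toMultiset.map π).sum := by
    rw [hz, hπ.apply_f_add_intCast, hπy]
  have hπ'M := y.toMultiset.apply_sum_eq_sum_map_of_Eset_subset hπ.2.1.le hπ.2.2.1 hE hπM
  exact mem_Pset_iff.mpr ⟨⟨z, hz⟩, by rw [← hπ'M, hz, hπ'.apply_f_add_intCast]⟩

lemma Eset_subset_of_Pset_subset (hπ : MinimalValid f π) (hP : Pset f π ⊆ Pset f π') :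
    Eset π ⊆ Eset π' := by
  rintro ⟨x, y⟩ (hxy : π x + π y = π (x + y))
  change π' x + π' y = π' (x + y)
  have hsym := hπ.2.2.2.2 (x + y)
  have hsplit : Multiset.toFinsupp {x, y, f - (x + y)} ∈ Pset f π := by
    rw [Multiset.toFinsupp_mem_Pset_iff]
    simp only [Multiset.insert_eq_cons, Multiset.map_cons, Multiset.sum_cons,
      Multiset.map_singleton, Multiset.sum_singleton]
    exact ⟨⟨0, by push_cast; ring⟩, by linarith⟩
  have hjoin : Multiset.toFinsupp {x + y, f - (x + y)} ∈ Pset f π := by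
    rw [Multiset.toFinsupp_mem_Pset_iff]
    simp only [Multiset.insert_eq_cons, Multiset.map_cons, Multiset.sum_cons,
      Multiset.map_singleton, Multiset.sum_singleton]
    exact ⟨⟨0, by push_cast; ring⟩, hsym⟩
  have hsplit' := ((Multiset.toFinsupp_mem_Pset_iff _).mp (hP hsplit)).2
  have hjoin' := ((Multiset.toFinsupp_mem_Pset_iff _).mp (hP hjoin)).2
  simp only [Multiset.insert_eq_cons, Multiset.map_cons, Multiset.sum_cons,
    Multiset.map_singleton, Multiset.sum_singleton] at hsplit' hjoin'
  linarith

lemma Eset_subset_iff_Pset_subset (hπ : MinimalValid f π) (hπ' : MinimalValid f π') :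
    Eset π ⊆ Eset π' ↔ Pset f π ⊆ Pset f π' :=
  ⟨Pset_subset_of_Eset_subset hπ hπ', Eset_subset_of_Pset_subset hπ⟩

end

theorem facet_iff_E_characterization_general (f : ℝ)
    (π : ℝ → ℝ) (hπ : MinimalValid f π) :
    (∀ π' : ℝ → ℝ, MinimalValid f π' → Pset f π ⊆ Pset f π' → π' = π) ↔
    (∀ π' : ℝ → ℝ, MinimalValid f π' → Eset π ⊆ Eset π' → π' = π) :=
  forall_congr' fun _ => imp_congr_right fun hπ' =>
    imp_congr_left (Eset_subset_iff_Pset_subset hπ hπ').symm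

theorem facet_iff_E_characterization (f : ℝ) (hf : ∀ z : ℤ, f ≠ z)
    (π : ℝ → ℝ) (hπ : MinimalValid f π) :
    (∀ π' : ℝ → ℝ, MinimalValid f π' → Pset f π ⊆ Pset f π' → π' = π) ↔
    (∀ π' : ℝ → ℝ, MinimalValid f π' → Eset π ⊆ Eset π' → π' = π) :=
  facet_iff_E_characterization_general f π hπ
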